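/- arXiv:2202.01973 — 3 statements merged into one kernel-verified Lean document; each statement's English description precedes it below -/
import Mathlib

section
/- Let Π be a 1-anticoherent subspace of C^N with orthonormal basis {φ_i}, and let Π(t) = U(t)(Π) where U(t) = exp(-i m(t)·S) for a smooth path m(t) of rotation vectors. Then the Wilczek–Zee connection A_{ij}(t) = ⟨φ_i(t)| d/dt |φ_j(t)⟩, with φ_i(t) = U(t)φ_i, vanishes identically. -/
/-!
With `X = m(t)·S` Hermitian, `U(t)ᴴ = exp (i X)`, so `U(t)ᴴ (m'(t)·S) U(t)` is the value at time
`1` of `C(s) = exp (s i X) C₀ exp (-s i X)`, which solves the linear ODE `C' = [i X, C]`. By the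
su(2) commutation relations this ODE preserves `span S`, and `C₀ = m'(t)·S` starts there, so
`U(t)ᴴ (m'(t)·S) U(t) ∈ span S`. Anticoherence says exactly that `⟨φ_i| · |φ_j⟩` vanishes on
`span S`.
-/

open Matrix NormedSpace

theorem Submodule.mem_of_hasDerivAt_eq_clm {E : Type*} [NormedAddCommGroup E]
    [NormedSpace ℝ E] {K : Submodule ℝ E} (hK : IsClosed (K : Set E)) (L : E →L[ℝ] E)
    (hL : ∀ x ∈ K, L x ∈ K) {c : ℝ → E} (hc : ∀ s, HasDerivAt c (L (c s)) s)
    (h0 : c 0 ∈ K) (s : ℝ) : c s ∈ K := by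
  -- the image in `E ⧸ K` solves a linear ODE with zero initial value
  let Lq : E ⧸ K →L[ℝ] E ⧸ K := K.liftQL (K.mkQL.comp L) fun x hx => by simpa using hL x hx
  have hq : ∀ u, HasDerivAt (fun u => K.mkQL (c u)) (Lq (K.mkQL (c u))) u := fun u =>
    K.mkQL.hasFDerivAt.comp_hasDerivAt u (hc u)
  have hq0 : (fun u => K.mkQL (c u)) = fun _ => 0 :=
    ODE_solution_unique_univ (v := fun _ => Lq) (s := fun _ => Set.univ) (t₀ := 0)
      (fun _ => Lq.lipschitz.lipschitzOnWith) (fun u => ⟨hq u, trivial⟩)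
      (fun u => ⟨by simpa using hasDerivAt_const u (0 : E ⧸ K), trivial⟩)
      (by simpa using h0)
  simpa using congrFun hq0 s

theorem Submodule.exp_mul_mul_exp_neg_mem {𝔸 : Type*} [NormedRing 𝔸] [NormedAlgebra ℝ 𝔸]
    [CompleteSpace 𝔸] {K : Submodule ℝ 𝔸} (hK : IsClosed (K : Set 𝔸)) {Y : 𝔸}
    (hY : ∀ A ∈ K, Y * A - A * Y ∈ K) {A : 𝔸} (hA : A ∈ K) :
    exp Y * A * exp (-Y) ∈ K := by
  let L : 𝔸 →L[ℝ] 𝔸 := ContinuousLinearMap.mul ℝ 𝔸 Y - (ContinuousLinearMap.mul ℝ 𝔸).flip Y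
  have hc : ∀ u : ℝ, HasDerivAt (fun u : ℝ => exp (u • Y) * A * exp (u • -Y))
      (L (exp (u • Y) * A * exp (u • -Y))) u := fun u => by
    refine (((hasDerivAt_exp_smul_const' Y u).mul_const A).fun_mul
      (hasDerivAt_exp_smul_const (-Y) u)).congr_deriv ?_
    change _ = Y * (exp (u • Y) * A * exp (u • -Y)) - exp (u • Y) * A * exp (u • -Y) * Y
    noncomm_ring
  simpa using Submodule.mem_of_hasDerivAt_eq_clm hK L (fun x hx => by simpa [L] using hY x hx) hc
    (by simpa using hA) 1

theorem commutator_mem_span_of_generators {R A ι : Type*} [CommRing R] [Ring A] [Algebra R A]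
    {S : ι → A} (hS : ∀ a b, S a * S b - S b * S a ∈ Submodule.span R (Set.range S))
    {X Y : A} (hX : X ∈ Submodule.span R (Set.range S))
    (hY : Y ∈ Submodule.span R (Set.range S)) :
    X * Y - Y * X ∈ Submodule.span R (Set.range S) := by
  let bracket : A →ₗ[R] A →ₗ[R] A := LinearMap.mul R A - (LinearMap.mul R A).flip
  have hmem := Submodule.apply_mem_map₂ bracket hX hY
  rw [Submodule.map₂_span_span] at hmem
  refine Submodule.span_le.mpr ?_ hmem
  rintro _ ⟨_, ⟨a, rfl⟩, _, ⟨b, rfl⟩, rfl⟩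
  exact hS a b

theorem dotProduct_mulVec_eq_zero_of_mem_span {R n ι : Type*} [CommSemiring R] [Fintype n]
    {S : ι → Matrix n n R} {u w : n → R} (hS : ∀ a, u ⬝ᵥ (S a *ᵥ w) = 0) {A : Matrix n n R}
    (hA : A ∈ Submodule.span R (Set.range S)) : u ⬝ᵥ (A *ᵥ w) = 0 := by
  induction hA using Submodule.span_induction with
  | mem _ h => obtain ⟨a, rfl⟩ := h; exact hS a
  | zero => simp
  | add _ _ _ _ h₁ h₂ => simp [add_mulVec, h₁, h₂]
  | smul _ _ _ h => simp [smul_mulVec, h]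

theorem su2_commutator_mem_span {N : ℕ} {S : Fin 3 → Matrix (Fin N) (Fin N) ℂ}
    (hcomm01 : S 0 * S 1 - S 1 * S 0 = Complex.I • S 2)
    (hcomm12 : S 1 * S 2 - S 2 * S 1 = Complex.I • S 0)
    (hcomm20 : S 2 * S 0 - S 0 * S 2 = Complex.I • S 1) (a b : Fin 3) :
    S a * S b - S b * S a ∈ Submodule.span ℂ (Set.range S) := by
  have hI : ∀ c, Complex.I • S c ∈ Submodule.span ℂ (Set.range S) := fun c =>
    Submodule.smul_mem _ _ (Submodule.subset_span ⟨c, rfl⟩)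
  fin_cases a <;> fin_cases b <;>
    simp [hI, hcomm01, hcomm12, hcomm20, ← neg_sub (S 0 * S 1), ← neg_sub (S 1 * S 2),
      ← neg_sub (S 2 * S 0)]

theorem WZ_connection_vanishes_general
    {N k : ℕ} (S : Fin 3 → Matrix (Fin N) (Fin N) ℂ)
    (hS : ∀ a, (S a).IsHermitian)
    (hcomm01 : S 0 * S 1 - S 1 * S 0 = Complex.I • S 2)
    (hcomm12 : S 1 * S 2 - S 2 * S 1 = Complex.I • S 0)
    (hcomm20 : S 2 * S 0 - S 0 * S 2 = Complex.I • S 1)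
    (φ : Fin k → (Fin N → ℂ))
    (hanti : ∀ (a : Fin 3) (i j : Fin k), star (φ i) ⬝ᵥ ((S a) *ᵥ φ j) = 0)
    (m m' : ℝ → (Fin 3 → ℝ))
    (U : ℝ → Matrix (Fin N) (Fin N) ℂ)
    (hU : ∀ t, U t = NormedSpace.exp ((-Complex.I) • ∑ b, ((m t b : ℂ) • S b))) :
    ∀ (t : ℝ) (i j : Fin k),
      star (U t *ᵥ φ i) ⬝ᵥ
        ((((-Complex.I) • ∑ b, ((m' t b : ℂ) • S b)) * U t) *ᵥ φ j) = 0 := by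
  intro t i j
  -- any normed algebra structure inducing the product topology will do: `exp` only sees topology
  let _ := Matrix.linftyOpNormedRing (n := Fin N) (α := ℂ)
  let _ := Matrix.linftyOpNormedAlgebra (n := Fin N) (R := ℝ) (α := ℂ)
  set V := Submodule.span ℂ (Set.range S)
  have combination_mem : ∀ c : Fin 3 → ℂ, ∑ b, c b • S b ∈ V := fun c =>
    Submodule.sum_mem _ fun b _ => Submodule.smul_mem _ _ (Submodule.subset_span ⟨b, rfl⟩)
  set X := ∑ b, (m t b : ℂ) • S b
  have hX : Xᴴ = X := by simp [X, conjTranspose_sum, (hS _).eq]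
  have hUt : U t = exp (-(Complex.I • X)) := by rw [hU, neg_smul]
  have hUadj : (U t)ᴴ = exp (Complex.I • X) := by
    rw [hU, ← exp_conjTranspose, conjTranspose_smul, hX]
    simp
  have hconj : (U t)ᴴ * ((-Complex.I) • ∑ b, ((m' t b : ℂ) • S b)) * U t ∈ V := by
    rw [hUadj, hUt]
    have hclosed : IsClosed (V.restrictScalars ℝ : Set (Matrix (Fin N) (Fin N) ℂ)) :=
      V.closed_of_finiteDimensional
    have hY : ∀ A ∈ V.restrictScalars ℝ,
        Complex.I • X * A - A * (Complex.I • X) ∈ V.restrictScalars ℝ := fun A hA =>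
      commutator_mem_span_of_generators (su2_commutator_mem_span hcomm01 hcomm12 hcomm20)
        (V.smul_mem _ (combination_mem _)) hA
    exact Submodule.exp_mul_mul_exp_neg_mem hclosed hY (V.smul_mem _ (combination_mem _))
  calc star (U t *ᵥ φ i) ⬝ᵥ ((((-Complex.I) • ∑ b, ((m' t b : ℂ) • S b)) * U t) *ᵥ φ j)
      = star (φ i) ⬝ᵥ (((U t)ᴴ * ((-Complex.I) • ∑ b, ((m' t b : ℂ) • S b)) * U t) *ᵥ φ j) := by
        simp only [star_mulVec, dotProduct_mulVec, vecMul_vecMul, Matrix.mul_assoc]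
    _ = 0 := dotProduct_mulVec_eq_zero_of_mem_span (hanti · i j) hconj

/-- For a 1-anticoherent subspace spanned by the orthonormal family {φ_i} and the
curve of rotations U(t) = exp(-i m(t)·S), with d/dt U(t) = -i (m'(t)·S) U(t),
the Wilczek–Zee connection A_{ij}(t) = ⟨U(t)φ_i | d/dt U(t)φ_j⟩ vanishes identically. -/
theorem WZ_connection_vanishes
    {N k : ℕ} (S : Fin 3 → Matrix (Fin N) (Fin N) ℂ)
    (hS : ∀ a, (S a).IsHermitian)
    (hcomm01 : S 0 * S 1 - S 1 * S 0 = Complex.I • S 2)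
    (hcomm12 : S 1 * S 2 - S 2 * S 1 = Complex.I • S 0)
    (hcomm20 : S 2 * S 0 - S 0 * S 2 = Complex.I • S 1)
    (φ : Fin k → (Fin N → ℂ))
    (hφ : ∀ i j, star (φ i) ⬝ᵥ φ j = if i = j then 1 else 0)
    (hanti : ∀ (a : Fin 3) (i j : Fin k), star (φ i) ⬝ᵥ ((S a) *ᵥ φ j) = 0)
    (m m' : ℝ → (Fin 3 → ℝ))
    (U : ℝ → Matrix (Fin N) (Fin N) ℂ)
    (hU : ∀ t, U t = NormedSpace.exp ((-Complex.I) • ∑ b, ((m t b : ℂ) • S b)))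
    (hderiv : ∀ (t : ℝ) (j : Fin k),
      HasDerivAt (fun s => U s *ᵥ φ j)
        ((((-Complex.I) • ∑ b, ((m' t b : ℂ) • S b)) * U t) *ᵥ φ j) t) :
    ∀ (t : ℝ) (i j : Fin k),
      star (U t *ᵥ φ i) ⬝ᵥ
        ((((-Complex.I) • ∑ b, ((m' t b : ℂ) • S b)) * U t) *ᵥ φ j) = 0 :=
  WZ_connection_vanishes_general S hS hcomm01 hcomm12 hcomm20 φ hanti m m' U hU
end

section
/- Let D = exp(-i π S_y) be the spin-2 rotation by angle π about the y-axis. Then D maps the subspace Π_NOT = span{ψ_1, ψ_2} to itself; more precisely, D ψ_1 = -ψ_2 and D ψ_2 = -ψ_1 (up to an overall consistent sign convention), so the matrix of D restricted to Π_NOT in the basis {ψ_1, ψ_2} is proportional to the Pauli matrix σ_x. -/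
/-!
`S_y` is conjugate to `S_z = diag(2, 1, 0, -1, -2)` by an explicit matrix `P` of
`S_y`-eigenvectors, so `exp(-iπ S_y) = P · diag(e^{-iπ m}) · P⁻¹ = P · diag((-1)^(2-m)) · P⁻¹`.
The antidiagonal signed permutation `|2, m⟩ ↦ (-1)^(2-m) |2, -m⟩` satisfies the same
intertwining relation with `P`, hence equals `exp(-iπ S_y)`; it sends
`ψ₁ = (|2⟩ + √2 |-1⟩)/√3` to `(|-2⟩ - √2 |1⟩)/√3 = ψ₂` and back.
-/

open Matrix Complex

/-- Spin-2 raising operator on ℂ⁵ in the basis |2,2⟩,…,|2,-2⟩ (index i ↔ m = 2 - i). -/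
noncomputable def Splus : Matrix (Fin 5) (Fin 5) ℂ :=
  Matrix.of fun i j =>
    if (i : ℕ) + 1 = (j : ℕ) then ((Real.sqrt ((j : ℕ) * (5 - (j : ℕ))) : ℝ) : ℂ) else 0

noncomputable def Sminus : Matrix (Fin 5) (Fin 5) ℂ := Splus.conjTranspose

noncomputable def Sx : Matrix (Fin 5) (Fin 5) ℂ := (1 / 2 : ℂ) • (Splus + Sminus)

noncomputable def Sy : Matrix (Fin 5) (Fin 5) ℂ := (-Complex.I / 2) • (Splus - Sminus)

noncomputable def Sz : Matrix (Fin 5) (Fin 5) ℂ :=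
  Matrix.diagonal fun i : Fin 5 => (2 : ℂ) - (i : ℕ)

/-- ψ₁ = (1/√3)(1,0,0,√2,0). -/
noncomputable def ψ1 : Fin 5 → ℂ := fun i =>
  ((Real.sqrt 3)⁻¹ : ℝ) * ![1, 0, 0, ((Real.sqrt 2 : ℝ) : ℂ), 0] i

/-- ψ₂ = (1/√3)(0,-√2,0,0,1). -/
noncomputable def ψ2 : Fin 5 → ℂ := fun i =>
  ((Real.sqrt 3)⁻¹ : ℝ) * ![0, -((Real.sqrt 2 : ℝ) : ℂ), 0, 0, 1] i

open Real

namespace Matrix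

variable {m 𝔸 : Type*} [Fintype m] [DecidableEq m] [NormedCommRing 𝔸] [NormedAlgebra ℚ 𝔸]
  [CompleteSpace 𝔸]

theorem exp_eq_of_mul_eq_mul {A B P Q : Matrix m m 𝔸} (hQP : Q * P = 1) (hAP : A * P = P * B) :
    NormedSpace.exp A = P * NormedSpace.exp B * Q := by
  have hPQ : P * Q = 1 := mul_eq_one_comm.mp hQP
  have hQ : P⁻¹ = Q := inv_eq_right_inv hPQ
  have hA : A = P * B * P⁻¹ := by rw [hQ, ← hAP, mul_assoc, hPQ, mul_one]
  rw [hA, exp_conj P B ⟨⟨P, Q, hPQ, hQP⟩, rfl⟩, hQ]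

end Matrix

noncomputable def sqrtSix : ℂ := ((√6 : ℝ) : ℂ)

theorem sqrtSix_sq : sqrtSix ^ 2 = 6 := by
  rw [sqrtSix, ← Complex.ofReal_pow, Real.sq_sqrt (by norm_num)]; norm_num

theorem Splus_eq :
    Splus = !![0, 2, 0, 0, 0; 0, 0, sqrtSix, 0, 0; 0, 0, 0, sqrtSix, 0; 0, 0, 0, 0, 2;
      0, 0, 0, 0, 0] := by
  have h4 : √(4 : ℝ) = 2 := by rw [show (4 : ℝ) = 2 ^ 2 by norm_num, Real.sqrt_sq zero_le_two]
  have h23 : ((√2 : ℝ) : ℂ) * (√3 : ℝ) = sqrtSix := by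
    rw [sqrtSix, ← ofReal_mul, ← Real.sqrt_mul zero_le_two]; norm_num
  have h32 : ((√3 : ℝ) : ℂ) * (√2 : ℝ) = sqrtSix := by rw [mul_comm, h23]
  ext i j
  fin_cases i <;> fin_cases j <;> norm_num [Splus, h4, h23, h32]

theorem Sy_eq :
    Sy = !![0, -I, 0, 0, 0;
      I, 0, -(I * sqrtSix) / 2, 0, 0;
      0, I * sqrtSix / 2, 0, -(I * sqrtSix) / 2, 0;
      0, 0, I * sqrtSix / 2, 0, -I;
      0, 0, 0, I, 0] := by
  have hconj : starRingEnd ℂ sqrtSix = sqrtSix := Complex.conj_ofReal _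
  rw [Sy, Sminus, Splus_eq]
  ext i j
  fin_cases i <;> fin_cases j <;> simp [conjTranspose_apply, hconj] <;> ring

noncomputable def SyEigenvectors : Matrix (Fin 5) (Fin 5) ℂ :=
  !![1, 1, 3, 1, 1;
     2 * I, I, 0, -I, -(2 * I);
     -sqrtSix, 0, sqrtSix, 0, -sqrtSix;
     -(2 * I), I, 0, -I, 2 * I;
     1, -1, 3, -1, 1]

noncomputable def SyEigenvectorsInv : Matrix (Fin 5) (Fin 5) ℂ :=
  !![1 / 16, -(2 * I) / 16, -sqrtSix / 16, (2 * I) / 16, 1 / 16;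
     1 / 4, -I / 4, 0, -I / 4, -(1 / 4);
     1 / 8, 0, sqrtSix / 24, 0, 1 / 8;
     1 / 4, I / 4, 0, I / 4, -(1 / 4);
     1 / 16, (2 * I) / 16, -sqrtSix / 16, -((2 * I) / 16), 1 / 16]

theorem SyEigenvectorsInv_mul : SyEigenvectorsInv * SyEigenvectors = 1 := by
  ext i j
  fin_cases i <;> fin_cases j <;>
    simp [SyEigenvectors, SyEigenvectorsInv, mul_apply, Fin.sum_univ_five, one_apply] <;>
    ring_nf <;> simp [sqrtSix_sq] <;> ring_nf

theorem Sy_mul_SyEigenvectors : Sy * SyEigenvectors = SyEigenvectors * Sz := by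
  rw [Sy_eq]
  ext i j
  fin_cases i <;> fin_cases j <;>
    simp [SyEigenvectors, Sz, mul_apply, Fin.sum_univ_five] <;>
    ring_nf <;> simp [sqrtSix_sq] <;> ring_nf

theorem Complex.exp_neg_I_pi_mul_two_sub (n : ℕ) : exp (-I * π * (2 - n)) = (-1) ^ n := by
  have h : -I * π * (2 - n) = n * (π * I) - 2 * π * I := by ring
  rw [h, exp_sub, exp_nat_mul, exp_pi_mul_I, exp_two_pi_mul_I, div_one]

theorem exp_neg_I_pi_smul_Sz :
    NormedSpace.exp ((-I * π) • Sz) = diagonal fun i : Fin 5 => (-1) ^ (i : ℕ) := by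
  rw [Sz, ← diagonal_smul, exp_diagonal]
  congr 1
  funext i
  rw [Pi.coe_exp, Pi.smul_apply, smul_eq_mul, ← Complex.exp_eq_exp_ℂ,
    Complex.exp_neg_I_pi_mul_two_sub]

/-- The Wigner matrix `d²(π)`: `|2, m⟩ ↦ (-1)^(2 - m) |2, -m⟩`, with index `j` for `m = 2 - j`. -/
noncomputable def rotationYPi : Matrix (Fin 5) (Fin 5) ℂ :=
  of fun i j => if (i : ℕ) + j = 4 then (-1) ^ (j : ℕ) else 0

theorem rotationYPi_mul_SyEigenvectors :
    rotationYPi * SyEigenvectors = SyEigenvectors * diagonal fun i : Fin 5 => (-1) ^ (i : ℕ) := by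
  ext i j
  fin_cases i <;> fin_cases j <;>
    simp [rotationYPi, SyEigenvectors, mul_apply, Fin.sum_univ_five] <;> norm_num

theorem exp_neg_I_pi_smul_Sy : NormedSpace.exp ((-I * π) • Sy) = rotationYPi := by
  have hQP := SyEigenvectorsInv_mul
  have hAP : ((-I * π) • Sy) * SyEigenvectors = SyEigenvectors * ((-I * π) • Sz) := by
    rw [smul_mul, Sy_mul_SyEigenvectors, Matrix.mul_smul]
  rw [exp_eq_of_mul_eq_mul hQP hAP, exp_neg_I_pi_smul_Sz, ← rotationYPi_mul_SyEigenvectors,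
    mul_assoc, mul_eq_one_comm.mp hQP, mul_one]

theorem rotationYPi_mulVec_ψ1 : rotationYPi *ᵥ ψ1 = ψ2 := by
  funext i
  fin_cases i <;> simp [rotationYPi, ψ1, ψ2, mulVec, dotProduct, Fin.sum_univ_five, pow_succ]

theorem rotationYPi_mulVec_ψ2 : rotationYPi *ᵥ ψ2 = ψ1 := by
  funext i
  fin_cases i <;> simp [rotationYPi, ψ1, ψ2, mulVec, dotProduct, Fin.sum_univ_five, pow_succ]

/-- The spin-2 rotation D = exp(-iπ S_y) maps Π_NOT to itself, interchanging ψ₁ and ψ₂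
up to an overall consistent sign: its restriction to Π_NOT is proportional (by ±1) to σ_x. -/
theorem rotation_y_pi_on_PiNOT :
    ∃ ε : ℂ, (ε = 1 ∨ ε = -1) ∧
      (NormedSpace.exp ((-Complex.I * (Real.pi : ℂ)) • Sy)) *ᵥ ψ1 = ε • ψ2 ∧
      (NormedSpace.exp ((-Complex.I * (Real.pi : ℂ)) • Sy)) *ᵥ ψ2 = ε • ψ1 := by
  refine ⟨1, Or.inl rfl, ?_, ?_⟩ <;> rw [exp_neg_I_pi_smul_Sy, one_smul]
  exacts [rotationYPi_mulVec_ψ1, rotationYPi_mulVec_ψ2]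
end

section
/- If Π is a 1-anticoherent k-plane and Π(t) = U(t)(Π) for a smooth path U(t) of rotations with U(0) = Id and U(T)(Π) = Π, then the Wilczek–Zee holonomy of the closed curve Π(t) equals the unitary matrix Q with Q_{ij} = ⟨φ_i| U(T) |φ_j⟩ (which is already unitary), where {φ_i} is any orthonormal basis of Π. In particular, the holonomy depends only on the endpoint U(T) and not on the path. -/
/-
The rotations `U t = exp (-i m(t)·S)` act on the spin operators by conjugation,
`U⁻¹ S_a U ∈ span {S_b}`, because the commutation relations make `span {S_b}` stable under
`ad S_b`. Hence anticoherence `⟨φ_i, S_a φ_j⟩ = 0` persists along the curve, and the Wilczek–Zee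
connection `⟨U φ_i, U̇ φ_j⟩ = ⟨U φ_i, -i m'·S U φ_j⟩` vanishes identically, so the path-ordered
exponential is the identity. Since `U T` is unitary and preserves the plane, the overlap matrix
`Q` is unitary, and the polar factor of a unitary matrix is the matrix itself.
-/

open Matrix
open scoped ComplexOrder

attribute [local instance] Matrix.linftyOpNormedAddCommGroup Matrix.linftyOpNormedSpace

attribute [local instance] Matrix.linftyOpNormedRing Matrix.linftyOpNormedAlgebra

open NormedSpace

lemma HasDerivAt.star_dotProduct_mulVec {n : Type*} [Fintype n] {u v : ℝ → n → ℂ}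
    {u' v' : n → ℂ} {s : ℝ} (hu : HasDerivAt u u' s) (M : Matrix n n ℂ)
    (hv : HasDerivAt v v' s) :
    HasDerivAt (fun r => star (u r) ⬝ᵥ (M *ᵥ v r))
      (star u' ⬝ᵥ (M *ᵥ v s) + star (u s) ⬝ᵥ (M *ᵥ v')) s := by
  have hMv : HasDerivAt (fun r => M *ᵥ v r) (M *ᵥ v') s :=
    (M.mulVecLin.toContinuousLinearMap.restrictScalars ℝ).hasFDerivAt.comp_hasDerivAt s hv
  simp only [dotProduct, ← Finset.sum_add_distrib]
  exact HasDerivAt.fun_sum fun i _ =>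
    (hasDerivAt_pi.1 hu.star i).mul (hasDerivAt_pi.1 hMv i)

namespace Matrix

variable {ι n : Type*}

section Orthonormal

variable [Fintype ι] [DecidableEq ι] [Fintype n] {φ : ι → n → ℂ}

lemma star_dotProduct_sum_smul (hφ : ∀ i j, star (φ i) ⬝ᵥ φ j = if i = j then 1 else 0)
    (c : ι → ℂ) (i : ι) : star (φ i) ⬝ᵥ ∑ j, c j • φ j = c i := by
  simp [dotProduct_sum, dotProduct_smul, hφ]

lemma star_dotProduct_eq_sum_of_mem_span
    (hφ : ∀ i j, star (φ i) ⬝ᵥ φ j = if i = j then 1 else 0)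
    {v : n → ℂ} (hv : v ∈ Submodule.span ℂ (Set.range φ)) (w : n → ℂ) :
    star v ⬝ᵥ w = ∑ i, star (star (φ i) ⬝ᵥ v) * (star (φ i) ⬝ᵥ w) := by
  obtain ⟨c, rfl⟩ := (Submodule.mem_span_range_iff_exists_fun ℂ).mp hv
  simp [star_dotProduct_sum_smul hφ, star_sum, sum_dotProduct, smul_dotProduct]

variable [DecidableEq n]

lemma star_mulVec_dotProduct_mulVec {W : Matrix n n ℂ} (hW : W ∈ unitaryGroup n ℂ)
    (v w : n → ℂ) : star (W *ᵥ v) ⬝ᵥ (W *ᵥ w) = star v ⬝ᵥ w := by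
  rw [dotProduct_mulVec, star_mulVec, vecMul_vecMul, ← star_eq_conjTranspose,
    mem_unitaryGroup_iff'.mp hW, vecMul_one]

theorem of_star_dotProduct_mulVec_mem_unitaryGroup
    (hφ : ∀ i j, star (φ i) ⬝ᵥ φ j = if i = j then 1 else 0)
    {W : Matrix n n ℂ} (hW : W ∈ unitaryGroup n ℂ)
    (hWφ : ∀ j, W *ᵥ φ j ∈ Submodule.span ℂ (Set.range φ)) :
    of (fun i j => star (φ i) ⬝ᵥ (W *ᵥ φ j)) ∈ unitaryGroup ι ℂ := by
  rw [mem_unitaryGroup_iff']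
  ext j l
  rw [mul_apply, one_apply, ← hφ, ← star_mulVec_dotProduct_mulVec hW,
    star_dotProduct_eq_sum_of_mem_span hφ (hWφ j)]
  rfl

end Orthonormal

section Polar

variable [Fintype n] [DecidableEq n]

lemma PosSemidef.eq_one_of_mem_unitaryGroup {H : Matrix n n ℂ} (hH : H.PosSemidef)
    (hU : H ∈ unitaryGroup n ℂ) : H = 1 := by
  open scoped MatrixOrder in
  have hsq : H ^ 2 = 1 ^ 2 := by
    rw [sq, one_pow, ← mem_unitaryGroup_iff'.mp hU, star_eq_conjTranspose, hH.isHermitian.eq]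
  rw [← CFC.sqrt_sq H hH.nonneg, hsq, CFC.sqrt_sq 1 zero_le_one]

lemma unitary_factor_eq_of_eq_mul_posSemidef {Q P H : Matrix n n ℂ}
    (hQ : Q ∈ unitaryGroup n ℂ) (hP : P ∈ unitaryGroup n ℂ) (hH : H.PosSemidef)
    (hQPH : Q = P * H) : P = Q := by
  have hH_eq : H = star P * Q := by
    rw [hQPH, ← mul_assoc, mem_unitaryGroup_iff'.mp hP, one_mul]
  have hHu : H ∈ unitaryGroup n ℂ := hH_eq ▸ mul_mem (Unitary.star_mem hP) hQ
  rw [hQPH, hH.eq_one_of_mem_unitaryGroup hHu, mul_one]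

end Polar

section Flow

variable [Fintype n]

lemma star_dotProduct_mulVec_eq_zero_of_mem_span {S : ι → Matrix n n ℂ} {u v : n → ℂ}
    (h : ∀ a, star u ⬝ᵥ (S a *ᵥ v) = 0) {M : Matrix n n ℂ}
    (hM : M ∈ Submodule.span ℂ (Set.range S)) : star u ⬝ᵥ (M *ᵥ v) = 0 := by
  induction hM using Submodule.span_induction with
  | mem _ hx => obtain ⟨a, rfl⟩ := hx; exact h a
  | zero => simp
  | add _ _ _ _ hx hy => rw [add_mulVec, dotProduct_add, hx, hy, add_zero]
  | smul c _ _ hx => rw [smul_mulVec, dotProduct_smul, hx, smul_zero]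

lemma star_mulVec_dotProduct_add (K M : Matrix n n ℂ) (u v : n → ℂ) :
    star (K *ᵥ u) ⬝ᵥ (M *ᵥ v) + star u ⬝ᵥ (M *ᵥ (K *ᵥ v)) =
      star u ⬝ᵥ ((Kᴴ * M + M * K) *ᵥ v) := by
  rw [star_mulVec, ← dotProduct_mulVec, add_mulVec, dotProduct_add, mulVec_mulVec,
    mulVec_mulVec]

variable [DecidableEq n]

lemma exp_mem_unitaryGroup_of_conjTranspose_eq_neg {K : Matrix n n ℂ} (hK : Kᴴ = -K) :
    exp K ∈ unitaryGroup n ℂ := by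
  rw [mem_unitaryGroup_iff', star_eq_conjTranspose, ← exp_conjTranspose, hK,
    ← Matrix.exp_add_of_commute _ _ (Commute.refl K).neg_left, neg_add_cancel, exp_zero]

lemma hasDerivAt_exp_smul_mulVec (K : Matrix n n ℂ) (x : n → ℂ) (s : ℝ) :
    HasDerivAt (fun r : ℝ => exp (r • K) *ᵥ x) (K *ᵥ (exp (s • K) *ᵥ x)) s := by
  let evalAt : Matrix n n ℂ →L[ℝ] n → ℂ :=
    LinearMap.toContinuousLinearMap ((mulVecBilin ℝ ℝ).flip x)
  rw [mulVec_mulVec]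
  exact evalAt.hasFDerivAt.comp_hasDerivAt s (hasDerivAt_exp_smul_const' K s)

variable [Fintype ι]

/-- If `ad K` maps every `S a` into `span {S b}`, then `h s a = ⟨e^{sK} x, S a e^{sK} y⟩`
solves a linear ODE `ḣ = C h`, so `h ≡ 0` as soon as `h 0 = 0`. -/
theorem star_dotProduct_mulVec_exp_eq_zero {S : ι → Matrix n n ℂ} {K : Matrix n n ℂ}
    (hK : Kᴴ = -K) (hSK : ∀ a, S a * K - K * S a ∈ Submodule.span ℂ (Set.range S))
    {x y : n → ℂ} (hxy : ∀ a, star x ⬝ᵥ (S a *ᵥ y) = 0) (a : ι) :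
    star (exp K *ᵥ x) ⬝ᵥ (S a *ᵥ (exp K *ᵥ y)) = 0 := by
  obtain ⟨C, hC⟩ : ∃ C : Matrix ι ι ℂ, ∀ a, ∑ b, C a b • S b = S a * K - K * S a :=
    Classical.skolem.mp fun a => (Submodule.mem_span_range_iff_exists_fun ℂ).mp (hSK a)
  set h : ℝ → ι → ℂ := fun s a => star (exp (s • K) *ᵥ x) ⬝ᵥ (S a *ᵥ (exp (s • K) *ᵥ y))
  have hODE : ∀ s, HasDerivAt h (C *ᵥ h s) s := fun s => hasDerivAt_pi.2 fun a => by
    refine ((hasDerivAt_exp_smul_mulVec K x s).star_dotProduct_mulVec (S a)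
      (hasDerivAt_exp_smul_mulVec K y s)).congr_deriv ?_
    rw [star_mulVec_dotProduct_add, hK, neg_mul, neg_add_eq_sub, ← hC, sum_mulVec,
      dotProduct_sum]
    change _ = ∑ b, C a b * h s b
    simp only [smul_mulVec, dotProduct_smul, smul_eq_mul, h]
  have hzero := ODE_solution_unique (v := fun _ z => C *ᵥ z) (g := fun _ => 0) (a := 0) (b := 1)
    (fun _ => (C.mulVecLin.toContinuousLinearMap).lipschitz)
    (fun s _ => (hODE s).continuousAt.continuousWithinAt)
    (fun s _ => (hODE s).hasDerivWithinAt) continuousOn_const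
    (fun s _ => by simpa [mulVec_zero] using (hasDerivAt_const s (0 : ι → ℂ)).hasDerivWithinAt)
    (funext fun a => by simpa [h] using hxy a)
  simpa [h] using congrFun (hzero (Set.right_mem_Icc.2 zero_le_one)) a

end Flow

section Spin

variable [Fintype n]

lemma commutator_mem_span_of_mem_span {S : ι → Matrix n n ℂ}
    (hS : ∀ a b, S a * S b - S b * S a ∈ Submodule.span ℂ (Set.range S)) (a : ι)
    {K : Matrix n n ℂ} (hK : K ∈ Submodule.span ℂ (Set.range S)) :
    S a * K - K * S a ∈ Submodule.span ℂ (Set.range S) := by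
  induction hK using Submodule.span_induction with
  | mem _ hx => obtain ⟨b, rfl⟩ := hx; exact hS a b
  | zero => simp
  | add K L _ _ hK hL =>
    rw [mul_add, add_mul, add_sub_add_comm]
    exact add_mem hK hL
  | smul c K _ hK =>
    rw [mul_smul_comm, smul_mul_assoc, ← smul_sub]
    exact Submodule.smul_mem _ c hK

lemma commutator_mem_span_of_su2 {S : Fin 3 → Matrix n n ℂ}
    (hcomm01 : S 0 * S 1 - S 1 * S 0 = Complex.I • S 2)
    (hcomm12 : S 1 * S 2 - S 2 * S 1 = Complex.I • S 0)
    (hcomm20 : S 2 * S 0 - S 0 * S 2 = Complex.I • S 1) (a b : Fin 3) :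
    S a * S b - S b * S a ∈ Submodule.span ℂ (Set.range S) := by
  have hgen : ∀ c, Complex.I • S c ∈ Submodule.span ℂ (Set.range S) := fun c =>
    Submodule.smul_mem _ _ (Submodule.subset_span ⟨c, rfl⟩)
  have hswap : ∀ b c, S b * S c - S c * S b ∈ Submodule.span ℂ (Set.range S) →
      S c * S b - S b * S c ∈ Submodule.span ℂ (Set.range S) := fun b c h => by
    rw [← neg_sub]; exact neg_mem h
  fin_cases a <;> fin_cases b <;> simp only [Fin.zero_eta, Fin.mk_one, Fin.reduceFinMk, sub_self,
    zero_mem, hcomm01, hcomm12, hcomm20, hgen, hswap]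

end Spin

section Rotation

variable [Fintype ι]

def rotationGenerator (S : ι → Matrix n n ℂ) (c : ι → ℝ) : Matrix n n ℂ :=
  (-Complex.I) • ∑ b, ((c b : ℂ) • S b)

lemma rotationGenerator_mem_span (S : ι → Matrix n n ℂ) (c : ι → ℝ) :
    rotationGenerator S c ∈ Submodule.span ℂ (Set.range S) :=
  Submodule.smul_mem _ _ <| Submodule.sum_mem _ fun b _ =>
    Submodule.smul_mem _ _ (Submodule.subset_span ⟨b, rfl⟩)

lemma conjTranspose_rotationGenerator {S : ι → Matrix n n ℂ} (hS : ∀ a, (S a).IsHermitian)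
    (c : ι → ℝ) : (rotationGenerator S c)ᴴ = -rotationGenerator S c := by
  simp [rotationGenerator, conjTranspose_sum, (hS _).eq]

variable [Fintype n] [DecidableEq n]

theorem star_dotProduct_rotationGenerator_mul_exp_mulVec_eq_zero {S : Fin 3 → Matrix n n ℂ}
    (hS : ∀ a, (S a).IsHermitian)
    (hcomm01 : S 0 * S 1 - S 1 * S 0 = Complex.I • S 2)
    (hcomm12 : S 1 * S 2 - S 2 * S 1 = Complex.I • S 0)
    (hcomm20 : S 2 * S 0 - S 0 * S 2 = Complex.I • S 1)
    {x y : n → ℂ} (hxy : ∀ a, star x ⬝ᵥ (S a *ᵥ y) = 0) (c c' : Fin 3 → ℝ) :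
    star (exp (rotationGenerator S c) *ᵥ x) ⬝ᵥ
      ((rotationGenerator S c' * exp (rotationGenerator S c)) *ᵥ y) = 0 := by
  have hsu2 := commutator_mem_span_of_su2 hcomm01 hcomm12 hcomm20
  have hK_normalizes (a : Fin 3) :=
    commutator_mem_span_of_mem_span hsu2 a (rotationGenerator_mem_span S c)
  rw [← mulVec_mulVec]
  exact star_dotProduct_mulVec_eq_zero_of_mem_span
    (star_dotProduct_mulVec_exp_eq_zero (conjTranspose_rotationGenerator hS c) hK_normalizes hxy)
    (rotationGenerator_mem_span S c')

end Rotation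

end Matrix

theorem toponomic_holonomy_general
    {N k : ℕ} (T : ℝ)
    (S : Fin 3 → Matrix (Fin N) (Fin N) ℂ)
    (hS : ∀ a, (S a).IsHermitian)
    (hcomm01 : S 0 * S 1 - S 1 * S 0 = Complex.I • S 2)
    (hcomm12 : S 1 * S 2 - S 2 * S 1 = Complex.I • S 0)
    (hcomm20 : S 2 * S 0 - S 0 * S 2 = Complex.I • S 1)
    (φ : Fin k → (Fin N → ℂ))
    (hφ : ∀ i j, star (φ i) ⬝ᵥ φ j = if i = j then 1 else 0)
    (hanti : ∀ (a : Fin 3) (i j : Fin k), star (φ i) ⬝ᵥ ((S a) *ᵥ φ j) = 0)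
    (m m' : ℝ → (Fin 3 → ℝ))
    (U : ℝ → Matrix (Fin N) (Fin N) ℂ)
    (hU : ∀ t, U t = NormedSpace.exp ((-Complex.I) • ∑ b, ((m t b : ℂ) • S b)))
    (hUT : Submodule.map (U T).mulVecLin (Submodule.span ℂ (Set.range φ)) =
      Submodule.span ℂ (Set.range φ))
    (A : ℝ → Matrix (Fin k) (Fin k) ℂ)
    (hA : ∀ t i j, A t i j =
      star (U t *ᵥ φ i) ⬝ᵥ
        ((((-Complex.I) • ∑ b, ((m' t b : ℂ) • S b)) * U t) *ᵥ φ j))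
    (Q : Matrix (Fin k) (Fin k) ℂ)
    (hQ : ∀ i j, Q i j = star (φ i) ⬝ᵥ (U T *ᵥ φ j)) :
    Q ∈ Matrix.unitaryGroup (Fin k) ℂ ∧
    (∀ t, A t = 0) ∧
    ∀ (F : ℝ → Matrix (Fin k) (Fin k) ℂ),
      F 0 = 1 → (∀ t, HasDerivAt F (A t * F t) t) →
      ∀ (P H : Matrix (Fin k) (Fin k) ℂ),
        P ∈ Matrix.unitaryGroup (Fin k) ℂ → H.PosSemidef → Q = P * H →
        P * (F T)⁻¹ = Q := by
  have hUT_unitary : U T ∈ unitaryGroup (Fin N) ℂ :=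
    hU T ▸ exp_mem_unitaryGroup_of_conjTranspose_eq_neg
      (conjTranspose_rotationGenerator hS (m T))
  have hUT_mem : ∀ j, U T *ᵥ φ j ∈ Submodule.span ℂ (Set.range φ) := fun j =>
    hUT ▸ Submodule.mem_map_of_mem (Submodule.subset_span ⟨j, rfl⟩)
  have hQ_unitary : Q ∈ unitaryGroup (Fin k) ℂ :=
    (Matrix.ext hQ : Q = _) ▸ of_star_dotProduct_mulVec_mem_unitaryGroup hφ hUT_unitary hUT_mem
  have hA_zero : ∀ t, A t = 0 := fun t => Matrix.ext fun i j => by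
    rw [hA, hU t]
    exact star_dotProduct_rotationGenerator_mul_exp_mulVec_eq_zero hS hcomm01 hcomm12 hcomm20
      (hanti · i j) (m t) (m' t)
  refine ⟨hQ_unitary, hA_zero, fun F hF0 hF P H hP hH hQPH => ?_⟩
  have hF_deriv : ∀ t, HasDerivAt F 0 t := fun t => by simpa [hA_zero t] using hF t
  have hFT : F T = 1 := hF0 ▸ is_const_of_deriv_eq_zero (fun t => (hF_deriv t).differentiableAt)
    (fun t => (hF_deriv t).deriv) T 0
  rw [hFT, inv_one, mul_one, unitary_factor_eq_of_eq_mul_posSemidef hQ_unitary hP hH hQPH]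

/-- Topological holonomy theorem: for a 1-anticoherent k-plane spanned by the
orthonormal family {φ_i}, and a smooth closed curve of rotations
U(t) = exp(-i m(t)·S) with U(0) = Id and U(T) mapping the plane to itself, the
overlap matrix Q_{ij} = ⟨φ_i| U(T) |φ_j⟩ is unitary, the Wilczek–Zee connection
A(t) vanishes, the path-ordered exponential F (solution of F' = A F, F(0) = Id)
equals Id at T, and hence the Wilczek–Zee holonomy U_geo = P·F(T)⁻¹ (P the polar
part of Q, i.e. Q = P·H with P unitary, H positive semidefinite) equals Q:
it depends only on the endpoint U(T), not on the path. -/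
theorem toponomic_holonomy
    {N k : ℕ} (T : ℝ) (hT : 0 ≤ T)
    (S : Fin 3 → Matrix (Fin N) (Fin N) ℂ)
    (hS : ∀ a, (S a).IsHermitian)
    (hcomm01 : S 0 * S 1 - S 1 * S 0 = Complex.I • S 2)
    (hcomm12 : S 1 * S 2 - S 2 * S 1 = Complex.I • S 0)
    (hcomm20 : S 2 * S 0 - S 0 * S 2 = Complex.I • S 1)
    (φ : Fin k → (Fin N → ℂ))
    (hφ : ∀ i j, star (φ i) ⬝ᵥ φ j = if i = j then 1 else 0)
    (hanti : ∀ (a : Fin 3) (i j : Fin k), star (φ i) ⬝ᵥ ((S a) *ᵥ φ j) = 0)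
    (m m' : ℝ → (Fin 3 → ℝ))
    (U : ℝ → Matrix (Fin N) (Fin N) ℂ)
    (hU : ∀ t, U t = NormedSpace.exp ((-Complex.I) • ∑ b, ((m t b : ℂ) • S b)))
    (hU0 : U 0 = 1)
    (hUT : Submodule.map (U T).mulVecLin (Submodule.span ℂ (Set.range φ)) =
      Submodule.span ℂ (Set.range φ))
    (A : ℝ → Matrix (Fin k) (Fin k) ℂ)
    (hA : ∀ t i j, A t i j =
      star (U t *ᵥ φ i) ⬝ᵥ
        ((((-Complex.I) • ∑ b, ((m' t b : ℂ) • S b)) * U t) *ᵥ φ j))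
    (hderiv : ∀ (t : ℝ) (j : Fin k),
      HasDerivAt (fun s => U s *ᵥ φ j)
        ((((-Complex.I) • ∑ b, ((m' t b : ℂ) • S b)) * U t) *ᵥ φ j) t)
    (Q : Matrix (Fin k) (Fin k) ℂ)
    (hQ : ∀ i j, Q i j = star (φ i) ⬝ᵥ (U T *ᵥ φ j)) :
    Q ∈ Matrix.unitaryGroup (Fin k) ℂ ∧
    (∀ t, A t = 0) ∧
    ∀ (F : ℝ → Matrix (Fin k) (Fin k) ℂ),
      F 0 = 1 → (∀ t, HasDerivAt F (A t * F t) t) →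
      ∀ (P H : Matrix (Fin k) (Fin k) ℂ),
        P ∈ Matrix.unitaryGroup (Fin k) ℂ → H.PosSemidef → Q = P * H →
        P * (F T)⁻¹ = Q :=
  toponomic_holonomy_general T S hS hcomm01 hcomm12 hcomm20 φ hφ hanti m m' U hU hUT A hA Q hQ
end
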